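/- Let Γ = (N, A, u) be a normal form game in which all players have the same strategy set. The following conditions are equivalent: (i) Γ is fully symmetric, i.e., for each i ∈ N and π ∈ S_N, u_i = u_{π(i)} ∘ π; (ii) Γ is standard symmetric (there exists a transitive subgroup H of S_N such that for each i ∈ N and π ∈ H, u_i = u_{π(i)} ∘ π) and weakly anonymous (for each i ∈ N and each permutation π of N fixing i, u_i = u_i ∘ π); (iii) for each i ∈ N and π ∈ S_N, u_{π(i)} = u_i ∘ π⁻¹; (iv) for each i ∈ N and each transposition τ of N, u_i = u_{τ(i)} ∘ τ; (v) for each i ∈ N and each transposition τ of N, u_i = u_{τ(i)} ∘ τ⁻¹. -/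

import Mathlib

/-!
The permutations `π` with `u i = u (π i) ∘ π` for every player `i` form a subgroup of `S_N`,
the symmetry group of the game, and each condition says that this group is everything.
For (iii) apply the definition to `π⁻¹`; for (iv) and (v) use that transpositions generate
`S_N` (a transposition is its own inverse). For (ii), given `π` and `i`, pick `σ ∈ H` with
`σ i = π i`: then `σ⁻¹ π` fixes `i`, so weak anonymity and the `σ`-symmetry give
`u i = u (π i) ∘ π`.
-/

def permAct {N A : Type*} (π : Equiv.Perm N) (s : N → A) : N → A :=
  fun i => s (π⁻¹ i)

open Equiv

section permAct

variable {N A : Type*}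

@[simp]
lemma permAct_one (s : N → A) : permAct 1 s = s := rfl

lemma permAct_mul (π σ : Perm N) (s : N → A) :
    permAct (π * σ) s = permAct π (permAct σ s) := rfl

@[simp]
lemma permAct_permAct_inv (π : Perm N) (s : N → A) : permAct π (permAct π⁻¹ s) = s := by
  rw [← permAct_mul, mul_inv_cancel, permAct_one]

end permAct

section symmetryGroup

variable {N A β : Type*} (u : N → (N → A) → β)

def symmetryGroup : Subgroup (Perm N) where
  carrier := {π | ∀ i s, u (π i) (permAct π s) = u i s}
  one_mem' _ _ := rfl
  mul_mem' {π σ} hπ hσ i s := by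
    rw [Perm.mul_apply, permAct_mul, hπ, hσ]
  inv_mem' {π} hπ i s := by
    simpa using (hπ (π⁻¹ i) (permAct π⁻¹ s)).symm

variable {u}

lemma mem_symmetryGroup {π : Perm N} :
    π ∈ symmetryGroup u ↔ ∀ i, u i = fun s => u (π i) (permAct π s) := by
  simp only [funext_iff]
  exact forall_congr' fun _ => forall_congr' fun _ => eq_comm

lemma inv_mem_symmetryGroup {π : Perm N} :
    π⁻¹ ∈ symmetryGroup u ↔ ∀ i, u (π i) = fun s => u i (permAct π⁻¹ s) := by
  rw [mem_symmetryGroup, π.surjective.forall]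
  simp only [Perm.coe_inv, symm_apply_apply]

lemma symmetryGroup_eq_top_iff :
    symmetryGroup u = ⊤ ↔ ∀ (i : N) (π : Perm N), u i = fun s => u (π i) (permAct π s) := by
  simp only [Subgroup.eq_top_iff', mem_symmetryGroup]
  exact forall_comm

lemma symmetryGroup_eq_top_iff_inv :
    symmetryGroup u = ⊤ ↔ ∀ (i : N) (π : Perm N), u (π i) = fun s => u i (permAct π⁻¹ s) := by
  rw [Subgroup.eq_top_iff', inv_surjective.forall]
  simp only [inv_mem_symmetryGroup]
  exact forall_comm

lemma symmetryGroup_eq_top_iff_swap [Finite N] [DecidableEq N] :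
    symmetryGroup u = ⊤ ↔ ∀ (i j k : N), j ≠ k →
      u i = fun s => u (swap j k i) (permAct (swap j k) s) := by
  rw [← top_le_iff, ← Perm.closure_isSwap, Subgroup.closure_le]
  constructor
  · intro h i j k hjk
    exact mem_symmetryGroup.mp (h ⟨j, k, hjk, rfl⟩) i
  · rintro h _ ⟨j, k, hjk, rfl⟩
    exact mem_symmetryGroup.mpr fun i => h i j k hjk

lemma symmetryGroup_eq_top_of_transitive {H : Subgroup (Perm N)}
    (hH : ∀ i j : N, ∃ π ∈ H, π i = j) (hHu : H ≤ symmetryGroup u)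
    (hanon : ∀ (i : N) (π : Perm N), π i = i → u i = fun s => u i (permAct π s)) :
    symmetryGroup u = ⊤ := by
  refine (Subgroup.eq_top_iff' _).mpr fun π i s => ?_
  obtain ⟨σ, hσH, hσ⟩ := hH i (π i)
  have hfix : (σ⁻¹ * π) i = i := by rw [Perm.mul_apply, ← hσ, Perm.inv_eq_iff_eq]
  calc u (π i) (permAct π s) = u (σ i) (permAct σ (permAct (σ⁻¹ * π) s)) := by
        rw [hσ, ← permAct_mul, mul_inv_cancel_left]
    _ = u i (permAct (σ⁻¹ * π) s) := hHu hσH i _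
    _ = u i s := (congrFun (hanon i _ hfix) s).symm

lemma symmetryGroup_eq_top_iff_transitive [DecidableEq N] :
    symmetryGroup u = ⊤ ↔
      (∃ H : Subgroup (Perm N), (∀ i j : N, ∃ π ∈ H, π i = j) ∧
        ∀ i : N, ∀ π ∈ H, u i = fun s => u (π i) (permAct π s)) ∧
      (∀ (i : N) (π : Perm N), π i = i → u i = fun s => u i (permAct π s)) := by
  constructor
  · intro h
    have hsymm := symmetryGroup_eq_top_iff.mp h
    refine ⟨⟨⊤, fun i j => ⟨swap i j, Subgroup.mem_top _, swap_apply_left i j⟩,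
      fun i π _ => hsymm i π⟩, fun i π hπ => ?_⟩
    simpa only [hπ] using hsymm i π
  · rintro ⟨⟨H, hH, hHu⟩, hanon⟩
    exact symmetryGroup_eq_top_of_transitive hH
      (fun π hπ => mem_symmetryGroup.mpr fun i => hHu i π hπ) hanon

end symmetryGroup

theorem fully_symmetric_tfae_general {N A : Type*} [Fintype N] [DecidableEq N]
    (u : N → (N → A) → ℝ) :
    List.TFAE [
      ∀ (i : N) (π : Equiv.Perm N), u i = fun s => u (π i) (permAct π s),
      (∃ H : Subgroup (Equiv.Perm N), (∀ i j : N, ∃ π ∈ H, π i = j) ∧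
        ∀ i : N, ∀ π ∈ H, u i = fun s => u (π i) (permAct π s)) ∧
      (∀ (i : N) (π : Equiv.Perm N), π i = i → u i = fun s => u i (permAct π s)),
      ∀ (i : N) (π : Equiv.Perm N), u (π i) = fun s => u i (permAct π⁻¹ s),
      ∀ (i j k : N), j ≠ k →
        u i = fun s => u (Equiv.swap j k i) (permAct (Equiv.swap j k) s),
      ∀ (i j k : N), j ≠ k →
        u i = fun s => u (Equiv.swap j k i) (permAct (Equiv.swap j k)⁻¹ s)
    ] := by
  tfae_have 1 ↔ 2 := symmetryGroup_eq_top_iff.symm.trans symmetryGroup_eq_top_iff_transitive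
  tfae_have 1 ↔ 3 := symmetryGroup_eq_top_iff.symm.trans symmetryGroup_eq_top_iff_inv
  tfae_have 1 ↔ 4 := symmetryGroup_eq_top_iff.symm.trans symmetryGroup_eq_top_iff_swap
  tfae_have 4 ↔ 5 := by simp only [swap_inv]
  tfae_finish

/-- Equivalent characterisations of full symmetry for a game in which all players
share the strategy set `A`:
(i) `u_i = u_{π(i)} ∘ π` for all `i` and all `π ∈ S_N`;
(ii) standard symmetric (invariance under some transitive subgroup `H ≤ S_N`)
and weakly anonymous (`u_i = u_i ∘ π` for every `π` fixing `i`);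
(iii) `u_{π(i)} = u_i ∘ π⁻¹` for all `i, π`;
(iv) `u_i = u_{τ(i)} ∘ τ` for all `i` and all transpositions `τ`;
(v) `u_i = u_{τ(i)} ∘ τ⁻¹` for all `i` and all transpositions `τ`. -/
theorem fully_symmetric_tfae {N A : Type*} [Fintype N] [DecidableEq N]
    [Fintype A] [Nonempty A] (hN : 2 ≤ Fintype.card N) (u : N → (N → A) → ℝ) :
    List.TFAE [
      ∀ (i : N) (π : Equiv.Perm N), u i = fun s => u (π i) (permAct π s),
      (∃ H : Subgroup (Equiv.Perm N), (∀ i j : N, ∃ π ∈ H, π i = j) ∧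
        ∀ i : N, ∀ π ∈ H, u i = fun s => u (π i) (permAct π s)) ∧
      (∀ (i : N) (π : Equiv.Perm N), π i = i → u i = fun s => u i (permAct π s)),
      ∀ (i : N) (π : Equiv.Perm N), u (π i) = fun s => u i (permAct π⁻¹ s),
      ∀ (i j k : N), j ≠ k →
        u i = fun s => u (Equiv.swap j k i) (permAct (Equiv.swap j k) s),
      ∀ (i j k : N), j ≠ k →
        u i = fun s => u (Equiv.swap j k i) (permAct (Equiv.swap j k)⁻¹ s)
    ] :=
  fully_symmetric_tfae_general u
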